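/- Let W ∈ ℝ^{N×N} satisfy 1_Nᵀ W = 0, W 1_N = 0, and W + Wᵀ + (1/N) 1_N 1_Nᵀ positive definite, and let α, β > 0. For the primal iteration x^{(τ+1)} = x^{(τ)} − αβ (W ⊗ I_n) ∇_x L(x^{(τ)}, μ^{(τ)}), the equality x^{(τ+1)} = x^{(τ)} holds if and only if ∇_x L(x^{(τ)}, μ^{(τ)}) = (1_N ⊗ I_n) p for some p ∈ ℝ^n (in particular this includes the case ∇_x L(x^{(τ)}, μ^{(τ)}) = 0 with p = 0). -/

import Mathlib

/-!
Since `αβ ≠ 0`, the iterate is stationary iff the gradient lies in the kernel of `W ⊗ I_n`, i.e. iff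
each of its `n` coordinate columns lies in the kernel of `W`. That kernel consists of the constant
vectors: `W 1 = 0`, and a kernel vector `w` with `∑ w = 0` satisfies
`wᵀ (W + Wᵀ + (1/N) 1 1ᵀ) w = 0`, which positive definiteness forbids unless `w = 0`.
-/

open scoped Kronecker Matrix

namespace Matrix

variable {ι ι' κ R : Type*} [Fintype ι]

theorem kronecker_one_mulVec_apply [Fintype κ] [DecidableEq κ] [CommSemiring R]
    (A : Matrix ι' ι R) (v : ι × κ → R) (i : ι') (j : κ) :
    ((A ⊗ₖ (1 : Matrix κ κ R)) *ᵥ v) (i, j) = (A *ᵥ fun i' => v (i', j)) i := by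
  simp [mulVec, dotProduct, Fintype.sum_prod_type, one_apply, mul_ite]

theorem kronecker_one_mulVec_eq_zero_iff [Fintype κ] [DecidableEq κ] [CommSemiring R]
    {A : Matrix ι ι R}
    (hker : ∀ u, A *ᵥ u = 0 ↔ ∃ c, u = fun _ => c) (v : ι × κ → R) :
    (A ⊗ₖ (1 : Matrix κ κ R)) *ᵥ v = 0 ↔ ∃ p : κ → R, v = fun q => p q.2 := by
  have hcol : (A ⊗ₖ (1 : Matrix κ κ R)) *ᵥ v = 0 ↔ ∀ j, A *ᵥ (fun i => v (i, j)) = 0 := by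
    simp only [funext_iff, Prod.forall, Pi.zero_apply, kronecker_one_mulVec_apply]
    exact forall_comm
  simp only [hcol, hker, funext_iff]
  constructor
  · intro h
    choose p hp using h
    exact ⟨p, fun q => hp q.2 q.1⟩
  · rintro ⟨p, hp⟩ j
    exact ⟨p j, fun i => hp (i, j)⟩

theorem eq_zero_of_mulVec_eq_zero_of_sum_eq_zero {W : Matrix ι ι ℝ}
    (hW : (W + Wᵀ + ((1 : ℝ) / Fintype.card ι) • of (fun _ _ => (1 : ℝ))).PosDef)
    {w : ι → ℝ} (hWw : W *ᵥ w = 0) (hw : ∑ i, w i = 0) : w = 0 := by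
  by_contra hw0
  have hquad : star w ⬝ᵥ ((W + Wᵀ + ((1 : ℝ) / Fintype.card ι) • of (fun _ _ => (1 : ℝ))) *ᵥ w)
      = 0 := by
    have hJ : (of (fun _ _ => (1 : ℝ)) : Matrix ι ι ℝ) *ᵥ w = 0 := by
      ext i
      simp [mulVec, dotProduct, hw]
    rw [star_trivial, add_mulVec, add_mulVec, smul_mulVec, hJ, hWw, dotProduct_add, dotProduct_add,
      dotProduct_mulVec, vecMul_transpose, hWw]
    simp
  exact (hW.dotProduct_mulVec_pos hw0).ne' hquad

theorem mulVec_eq_zero_iff_eq_const [Nonempty ι] {W : Matrix ι ι ℝ}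
    (hW1 : W *ᵥ (fun _ => (1 : ℝ)) = 0)
    (hW : (W + Wᵀ + ((1 : ℝ) / Fintype.card ι) • of (fun _ _ => (1 : ℝ))).PosDef)
    (u : ι → ℝ) : W *ᵥ u = 0 ↔ ∃ c, u = fun _ => c := by
  have hconst (c : ℝ) : W *ᵥ (fun _ => c) = 0 := by
    rw [show (fun _ : ι => c) = c • fun _ => 1 from funext fun _ => (mul_one c).symm,
      mulVec_smul, hW1, smul_zero]
  refine ⟨fun hu => ?_, by rintro ⟨c, rfl⟩; exact hconst c⟩
  -- `u` minus its mean is a kernel vector with zero sum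
  set c := (∑ i, u i) / Fintype.card ι
  have hsum : ∑ i, (u - fun _ => c : ι → ℝ) i = 0 := by
    have : (Fintype.card ι : ℝ) ≠ 0 := Nat.cast_ne_zero.mpr Fintype.card_ne_zero
    simp [Finset.sum_sub_distrib, c, mul_div_cancel₀ _ this]
  have hker : W *ᵥ (u - fun _ => c) = 0 := by rw [mulVec_sub, hu, hconst, sub_zero]
  exact ⟨c, sub_eq_zero.mp (eq_zero_of_mulVec_eq_zero_of_sum_eq_zero hW hker hsum)⟩

end Matrix

theorem stmt_3_general
    (N n m : ℕ) (hN : 0 < N)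
    (gradL : EuclideanSpace ℝ (Fin N × Fin n) → EuclideanSpace ℝ (Fin m) →
      EuclideanSpace ℝ (Fin N × Fin n))
    (W : Matrix (Fin N) (Fin N) ℝ)
    (hWr : W *ᵥ (fun _ => (1 : ℝ)) = 0)
    (hWpos : (W + Wᵀ + ((1 : ℝ) / N) • Matrix.of (fun _ _ => (1 : ℝ))).PosDef)
    (α β : ℝ) (hα : 0 < α) (hβ : 0 < β)
    (x : ℕ → EuclideanSpace ℝ (Fin N × Fin n))
    (μ : ℕ → EuclideanSpace ℝ (Fin m))
    (hiter : ∀ τ', x (τ' + 1) = x τ' -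
      (α * β) • Matrix.toEuclideanLin (W ⊗ₖ (1 : Matrix (Fin n) (Fin n) ℝ))
        (gradL (x τ') (μ τ')))
    (τ : ℕ) :
    x (τ + 1) = x τ ↔
      ∃ p : Fin n → ℝ, gradL (x τ) (μ τ) =
        (EuclideanSpace.equiv (Fin N × Fin n) ℝ).symm (fun q => p q.2) := by
  have : Nonempty (Fin N) := ⟨⟨0, hN⟩⟩
  have hker := Matrix.mulVec_eq_zero_iff_eq_const hWr (by simpa using hWpos)
  rw [hiter τ, sub_eq_self, smul_eq_zero, or_iff_right (by positivity), Matrix.toLpLin_apply,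
    WithLp.toLp_eq_zero, Matrix.kronecker_one_mulVec_eq_zero_iff hker]
  exact exists_congr fun _ => (WithLp.equiv 2 _).eq_symm_apply.symm

/-- Lemma 1(iii) of the paper.
If `1_Nᵀ W = 0`, `W 1_N = 0`, `W + Wᵀ + (1/N) 1_N 1_Nᵀ ≻ 0` and `α, β > 0`, then for the
primal iteration `x^{(τ+1)} = x^{(τ)} − αβ (W ⊗ I_n) ∇_x L(x^{(τ)}, μ^{(τ)})`, the equality
`x^{(τ+1)} = x^{(τ)}` holds iff `∇_x L(x^{(τ)}, μ^{(τ)}) = (1_N ⊗ I_n) p` for some `p ∈ ℝ^n`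
(which includes `∇_x L = 0` with `p = 0`). -/
theorem stmt_3
    (N n m : ℕ) (hN : 0 < N) (hn : 0 < n) (hm : 0 < m)
    (f : EuclideanSpace ℝ (Fin N × Fin n) → ℝ)
    (g : EuclideanSpace ℝ (Fin N × Fin n) → Fin m → ℝ)
    (hf : ContDiff ℝ 1 f) (hfconv : ConvexOn ℝ Set.univ f)
    (hg : ∀ q, ContDiff ℝ 1 (fun x => g x q))
    (hgconv : ∀ q, ConvexOn ℝ Set.univ (fun x => g x q))
    (ν ε : ℝ) (hν : 0 < ν) (hε : 0 < ε)
    (L : EuclideanSpace ℝ (Fin N × Fin n) → EuclideanSpace ℝ (Fin m) → ℝ)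
    (hL : ∀ x μ, L x μ =
      f x + ν / 2 * ‖x‖ ^ 2 + ∑ q, μ q * g x q - ε / 2 * ‖μ‖ ^ 2)
    (gradL : EuclideanSpace ℝ (Fin N × Fin n) → EuclideanSpace ℝ (Fin m) →
      EuclideanSpace ℝ (Fin N × Fin n))
    (hgrad : ∀ x μ, HasGradientAt (fun y => L y μ) (gradL x μ) x)
    (W : Matrix (Fin N) (Fin N) ℝ)
    (hWl : Matrix.vecMul (fun _ => (1 : ℝ)) W = 0)
    (hWr : W *ᵥ (fun _ => (1 : ℝ)) = 0)
    (hWpos : (W + Wᵀ + ((1 : ℝ) / N) • Matrix.of (fun _ _ => (1 : ℝ))).PosDef)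
    (α β : ℝ) (hα : 0 < α) (hβ : 0 < β)
    (x : ℕ → EuclideanSpace ℝ (Fin N × Fin n))
    (μ : ℕ → EuclideanSpace ℝ (Fin m))
    (hiter : ∀ τ', x (τ' + 1) = x τ' -
      (α * β) • Matrix.toEuclideanLin (W ⊗ₖ (1 : Matrix (Fin n) (Fin n) ℝ))
        (gradL (x τ') (μ τ')))
    (τ : ℕ) :
    x (τ + 1) = x τ ↔
      ∃ p : Fin n → ℝ, gradL (x τ) (μ τ) =
        (EuclideanSpace.equiv (Fin N × Fin n) ℝ).symm (fun q => p q.2) :=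
  stmt_3_general N n m hN gradL W hWr hWpos α β hα hβ x μ hiter τ
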